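/- arXiv:2002.11577 — 2 statements merged into one kernel-verified Lean document; each statement's English description precedes it below -/
import Mathlib

section
/- Let K ≥ 1 and n_1, …, n_K be positive integers summing to n. Define p(α) = Γ(αK) · ∏_{k=1}^K Γ(α + n_k) / (Γ(α)^K · Γ(n + αK)). Then lim_{α→0⁺} [log p(α) − (K−1) log α] = −log K + Σ_{k=1}^K log Γ(n_k) − log Γ(n). -/
/-!
Using `Γ(α) = Γ(α + 1) / α` and `Γ(αK) = Γ(αK + 1) / (αK)`, the Dirichlet-multinomial
probability is `p(α) = α^(K-1) K⁻¹ Γ(αK + 1) ∏ₖ Γ(α + nₖ) / (Γ(α + 1)^K Γ(n + αK))`.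
After dividing by `α^(K-1)` only Gamma values at points bounded away from the poles remain,
so the limit is obtained by setting `α = 0`.
-/

open Real Filter Topology

theorem ContinuousAt.log_Gamma {f : ℝ → ℝ} {x : ℝ} (hf : ContinuousAt f x) (hx : 0 < f x) :
    ContinuousAt (fun y => Real.log (Gamma (f y))) x := by
  have hΓ : DifferentiableAt ℝ Gamma (f x) :=
    differentiableAt_Gamma fun m hm => by linarith [hm ▸ hx, (Nat.cast_nonneg m : (0 : ℝ) ≤ m)]
  exact (hΓ.continuousAt.comp hf).log (Gamma_pos_of_pos hx).ne'

theorem log_Gamma_eq_log_Gamma_add_one_sub_log {x : ℝ} (hx : 0 < x) :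
    log (Gamma x) = log (Gamma (x + 1)) - log x := by
  rw [Gamma_add_one hx.ne', log_mul hx.ne' (Gamma_pos_of_pos hx).ne']
  ring

theorem log_dirichletMultinomial_sub_mul_log_eq {K : ℕ} (hK : 0 < K) (x : Fin K → ℝ)
    (hx : ∀ k, 0 ≤ x k) {m : ℝ} (hm : 0 ≤ m) {α : ℝ} (hα : 0 < α) :
    log (Gamma (α * K) * (∏ k, Gamma (α + x k)) / (Gamma α ^ K * Gamma (m + α * K)))
        - ((K : ℝ) - 1) * log α
      = log (Gamma (α * K + 1)) - log K + ∑ k, log (Gamma (α + x k))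
        - K * log (Gamma (α + 1)) - log (Gamma (m + α * K)) := by
  have hKpos : (0 : ℝ) < K := Nat.cast_pos.mpr hK
  have hαK : 0 < α * K := mul_pos hα hKpos
  have hΓx : ∀ k, Gamma (α + x k) ≠ 0 := fun k => (Gamma_pos_of_pos (by linarith [hx k])).ne'
  have hΓαK := (Gamma_pos_of_pos hαK).ne'
  have hΓα := (Gamma_pos_of_pos hα).ne'
  have hΓm := (Gamma_pos_of_pos (by linarith : 0 < m + α * K)).ne'
  have hΓprod : ∏ k, Gamma (α + x k) ≠ 0 := Finset.prod_ne_zero_iff.mpr fun k _ => hΓx k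
  rw [log_div (mul_ne_zero hΓαK hΓprod) (mul_ne_zero (pow_ne_zero K hΓα) hΓm),
    log_mul hΓαK hΓprod, log_mul (pow_ne_zero K hΓα) hΓm, log_pow,
    log_prod fun k _ => hΓx k, log_Gamma_eq_log_Gamma_add_one_sub_log hα,
    log_Gamma_eq_log_Gamma_add_one_sub_log hαK, log_mul hα.ne' hKpos.ne']
  ring

theorem icl_lin_intercept_limit
    (K n : ℕ) (hK : 1 ≤ K) (nk : Fin K → ℕ)
    (hpos : ∀ k, 0 < nk k) (hsum : ∑ k, nk k = n) :
    Tendsto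
      (fun α : ℝ =>
        Real.log (Real.Gamma (α * K) * (∏ k, Real.Gamma (α + nk k)) /
            (Real.Gamma α ^ K * Real.Gamma (n + α * K)))
          - ((K : ℝ) - 1) * Real.log α)
      (nhdsWithin 0 (Set.Ioi 0))
      (nhds (-Real.log K + (∑ k, Real.log (Real.Gamma (nk k))) - Real.log (Real.Gamma n))) := by
  have hn : 0 < n := hsum ▸ Finset.sum_pos (fun k _ => hpos k) ⟨⟨0, hK⟩, Finset.mem_univ _⟩
  set g : ℝ → ℝ := fun α => log (Gamma (α * K + 1)) - log K + ∑ k, log (Gamma (α + nk k))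
    - K * log (Gamma (α + 1)) - log (Gamma (n + α * K))
  have hg : ContinuousAt g 0 := by
    refine ((((ContinuousAt.log_Gamma (by fun_prop) (by simp)).sub continuousAt_const).add
      (tendsto_finsetSum _ fun k _ => ContinuousAt.log_Gamma (by fun_prop) ?_)).sub
      (continuousAt_const.mul (ContinuousAt.log_Gamma (by fun_prop) (by simp)))).sub
      (ContinuousAt.log_Gamma (by fun_prop) (by simpa using hn))
    simpa using hpos k
  have hg0 : g 0 = -log K + ∑ k, log (Gamma (nk k)) - log (Gamma n) := by simp [g]
  refine (hg0 ▸ hg.tendsto.mono_left nhdsWithin_le_nhds).congr' ?_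
  filter_upwards [self_mem_nhdsWithin] with α hα
  exact (log_dirichletMultinomial_sub_mul_log_eq hK _ (fun k => Nat.cast_nonneg _)
    (Nat.cast_nonneg n) hα).symm
end

section
/- Let α > 0, K_r, K_c ≥ 1, and define ICL_lin(Z, α) = (K_r − 1) log α + (K_c − 1) log α + I(Z) for a bipartition Z with K_r row clusters and K_c column clusters. Then as α → 0⁺, log p(Z | α) − (K_r + K_c − 2) log α converges to I(Z) := −log K_r − log K_c + Σ_k log Γ(n_k) + Σ_l log Γ(m_l) − log Γ(n) − log Γ(p), where p(Z | α) is the factorized Dirichlet-multinomial bipartition probability. -/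
/-!
By `Γ(x + 1) = x Γ(x)`, `Γ(αK) / Γ(α)^K = α^(K-1) Γ(αK + 1) / (K Γ(α + 1)^K)`. Hence each of the
two Dirichlet-multinomial factors of `p(Z | α)` is `α^(K-1)` times a function of `α` that is
continuous at `0` with positive value `∏ᵢ Γ(sᵢ) / (K Γ(N))` there, and subtracting
`(K - 1) log α` from its logarithm leaves a quantity tending to `-log K + ∑ᵢ log Γ(sᵢ) - log Γ(N)`.
-/

open Real Filter Topology

namespace Real

lemma continuousAt_Gamma_of_pos {x : ℝ} (hx : 0 < x) : ContinuousAt Gamma x :=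
  (differentiableOn_Gamma_Ioi.differentiableAt (Ioi_mem_nhds hx)).continuousAt

lemma Gamma_mul_nat_div_Gamma_pow {α : ℝ} (hα : 0 < α) {K : ℕ} (hK : 0 < K) :
    Gamma (α * K) / Gamma α ^ K = α ^ (K - 1) * (Gamma (α * K + 1) / (K * Gamma (α + 1) ^ K)) := by
  have hαK : 0 < α * K := mul_pos hα (Nat.cast_pos.mpr hK)
  obtain ⟨k, rfl⟩ : ∃ k, K = k + 1 := ⟨K - 1, by omega⟩
  rw [Gamma_add_one hαK.ne', Gamma_add_one hα.ne', Nat.add_sub_cancel]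
  have := (Gamma_pos_of_pos hα).ne'
  field_simp
  ring

end Real

noncomputable def dirichletPartitionProb (K N : ℕ) (s : Fin K → ℕ) (α : ℝ) : ℝ :=
  Gamma (α * K) * (∏ i, Gamma (α + s i)) / (Gamma α ^ K * Gamma (N + α * K))

section

variable {K N : ℕ} {s : Fin K → ℕ}

lemma dirichletPartitionProb_pos (hK : 0 < K) {α : ℝ} (hα : 0 < α) :
    0 < dirichletPartitionProb K N s α := by
  have hαK : 0 < α * K := mul_pos hα (Nat.cast_pos.mpr hK)
  unfold dirichletPartitionProb
  have := Gamma_pos_of_pos hαK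
  have := Gamma_pos_of_pos hα
  have : 0 < ∏ i, Gamma (α + s i) :=
    Finset.prod_pos fun i _ => Gamma_pos_of_pos (by positivity)
  have := Gamma_pos_of_pos (show 0 < (N : ℝ) + α * K by positivity)
  positivity

lemma dirichletPartitionProb_eq_pow_mul (hK : 0 < K) {α : ℝ} (hα : 0 < α) :
    dirichletPartitionProb K N s α = α ^ (K - 1) *
      (Gamma (α * K + 1) * (∏ i, Gamma (α + s i)) / (K * Gamma (α + 1) ^ K * Gamma (N + α * K))) := by
  rw [dirichletPartitionProb, mul_div_mul_comm, Gamma_mul_nat_div_Gamma_pow hα hK]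
  ring

theorem tendsto_log_dirichletPartitionProb_sub (hK : 0 < K) (hN : 0 < N) (hs : ∀ i, 0 < s i) :
    Tendsto (fun α => log (dirichletPartitionProb K N s α) - ((K : ℝ) - 1) * log α) (𝓝[>] 0)
      (𝓝 (-log K + ∑ i, log (Gamma (s i)) - log (Gamma N))) := by
  set f : ℝ → ℝ := fun α =>
    Gamma (α * K + 1) * (∏ i, Gamma (α + s i)) / (K * Gamma (α + 1) ^ K * Gamma (N + α * K))
  have hΓ_comp {g : ℝ → ℝ} (hg : ContinuousAt g 0) (hg0 : 0 < g 0) :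
      ContinuousAt (fun α => Gamma (g α)) 0 :=
    (continuousAt_Gamma_of_pos hg0).comp hg
  have hf0 : f 0 = (∏ i, Gamma (s i)) / (K * Gamma N) := by simp [f]
  have hΓs : ∀ i, 0 < Gamma (s i) := fun i => Gamma_pos_of_pos (Nat.cast_pos.mpr (hs i))
  have hΓN : 0 < Gamma N := Gamma_pos_of_pos (Nat.cast_pos.mpr hN)
  have hK' : (0 : ℝ) < K := Nat.cast_pos.mpr hK
  have hf0_pos : 0 < f 0 := by
    rw [hf0]
    have := Finset.prod_pos fun i (_ : i ∈ Finset.univ) => hΓs i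
    positivity
  have hf : ContinuousAt f 0 := by
    refine ((hΓ_comp (by fun_prop) (by simp)).mul
      (tendsto_finsetProd _ fun i _ => hΓ_comp (by fun_prop) (by simpa using hs i))).div
      ((continuousAt_const.mul ((hΓ_comp (by fun_prop) (by simp)).pow K)).mul
        (hΓ_comp (by fun_prop) (by simpa using hN))) ?_
    exact fun hden => hf0_pos.ne' (by simp only [f]; rw [hden, div_zero])
  have hlim : Tendsto (fun α => log (f α)) (𝓝[>] 0) (𝓝 (log (f 0))) :=
    (hf.log hf0_pos.ne').tendsto.mono_left nhdsWithin_le_nhds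
  convert hlim.congr' ?_ using 2
  · rw [hf0, log_div (Finset.prod_pos fun i _ => hΓs i).ne' (mul_pos hK' hΓN).ne',
      log_mul hK'.ne' hΓN.ne', log_prod fun i _ => (hΓs i).ne']
    ring
  · filter_upwards [self_mem_nhdsWithin] with α hα
    have hprob := dirichletPartitionProb_pos (N := N) (s := s) hK hα
    rw [dirichletPartitionProb_eq_pow_mul hK hα] at hprob ⊢
    rw [log_mul (pow_pos hα _).ne' (pos_of_mul_pos_right hprob (pow_pos hα _).le).ne', log_pow,
      Nat.cast_sub hK]
    push_cast
    ring

end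

theorem lbm_icl_lin_intercept_limit
    (n p Kr Kc : ℕ) (hKr : 1 ≤ Kr) (hKc : 1 ≤ Kc)
    (nk : Fin Kr → ℕ) (ml : Fin Kc → ℕ)
    (hnk : ∀ k, 0 < nk k) (hml : ∀ l, 0 < ml l)
    (hsumn : ∑ k, nk k = n) (hsump : ∑ l, ml l = p) :
    Tendsto
      (fun α : ℝ =>
        Real.log
            ((Real.Gamma (α * Kr) * (∏ k, Real.Gamma (α + nk k)) /
                (Real.Gamma α ^ Kr * Real.Gamma (n + α * Kr))) *
              (Real.Gamma (α * Kc) * (∏ l, Real.Gamma (α + ml l)) /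
                (Real.Gamma α ^ Kc * Real.Gamma (p + α * Kc))))
          - ((Kr : ℝ) + Kc - 2) * Real.log α)
      (nhdsWithin 0 (Set.Ioi 0))
      (nhds (-Real.log Kr - Real.log Kc
        + (∑ k, Real.log (Real.Gamma (nk k))) + (∑ l, Real.log (Real.Gamma (ml l)))
        - Real.log (Real.Gamma n) - Real.log (Real.Gamma p))) := by
  change Tendsto (fun α : ℝ => log (dirichletPartitionProb Kr n nk α *
    dirichletPartitionProb Kc p ml α) - ((Kr : ℝ) + Kc - 2) * log α) _ _
  have hn : 0 < n := hsumn ▸ Finset.sum_pos (fun k _ => hnk k) ⟨⟨0, hKr⟩, Finset.mem_univ _⟩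
  have hp : 0 < p := hsump ▸ Finset.sum_pos (fun l _ => hml l) ⟨⟨0, hKc⟩, Finset.mem_univ _⟩
  have hrows := tendsto_log_dirichletPartitionProb_sub hKr hn hnk
  have hcols := tendsto_log_dirichletPartitionProb_sub hKc hp hml
  convert (hrows.add hcols).congr' ?_ using 2
  · ring
  · filter_upwards [self_mem_nhdsWithin] with α hα
    rw [log_mul (dirichletPartitionProb_pos hKr hα).ne' (dirichletPartitionProb_pos hKc hα).ne']
    ring
end
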